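/- arXiv:0906.4661 — 2 statements merged into one kernel-verified Lean document; each statement's English description precedes it below -/
import Mathlib

section
/- Suppose l ∈ ℝ and Q, N, Φ₁, ψ₂ are radial functions on ℝ³ (with Q, N ∈ C¹((0,∞)), Q bounded near 0 with Q = O(r⁻²) at infinity, N → 0 at infinity, Φ₁ ∈ H²_rad, ψ₂ ∈ C¹) satisfying, on (0,∞): (rQ)′ + 2l(rf₀)′ − 16πmG r²Φ₁² = 0; 2rN′ − 2lf₀ − Q = 0; (η/ħ − mN/ħ)Φ₁ − ψ₂′ − (2/r)ψ₂ = 0; (2m/ħ)ψ₂ + Φ₁′ = 0, where f₀(r) = r²/(1+r)³ and η ∈ ℝ. Then −ΔN = −8πmG|Φ₁|² on ℝ³, ψ₂ = −(ħ/(2m))Φ₁′, and Φ₁ satisfies ηΦ₁ = −(ħ²/(2m))ΔΦ₁ + mNΦ₁; that is, (Φ₁, N) is a bound-state solution of the Newton–Schrödinger system with frequency η. -/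
/-!
STATEMENT 12: Any solution of the `ε = 0` (Newtonian) limit of the rescaled
spherically symmetric Einstein–Dirac system gives a bound-state solution of the
Newton–Schrödinger system: `−ΔN = −8πmG|Φ₁|²`, `ψ₂ = −(ħ/2m)Φ₁′` and
`ηΦ₁ = −(ħ²/2m)ΔΦ₁ + mNΦ₁`.
-/

noncomputable section

open MeasureTheory Real Set Filter Topology Asymptotics

abbrev E3 := EuclideanSpace ℝ (Fin 3)

/-- The radial extension of a profile on `[0,∞)` to `ℝ³`. -/
def radExt (f : ℝ → ℝ) : E3 → ℝ := fun x => f ‖x‖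

/-- `f₀(r) = r²/(1+r)³`. -/
def f0 (r : ℝ) : ℝ := r ^ 2 / (1 + r) ^ 3

/-! In divergence form the radial Laplacian is `ΔN = r⁻² (r² N′)′`. The second equation gives
`r² N′ = (r Q)/2 + l r f₀`, whose derivative the first equation identifies with `8πmG r² Φ₁²`.
The fourth equation expresses `ψ₂` through `Φ₁′`; substituting it into the third gives the
Schrödinger equation. -/

theorem deriv_deriv_add_div_mul_deriv_eq_of_pow_mul_deriv_eq {f M : ℝ → ℝ} {M' r : ℝ} (n : ℕ)
    (hr : 0 < r) (hfM : ∀ s, 0 < s → s ^ n * deriv f s = M s) (hM : HasDerivAt M M' r) :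
    deriv (deriv f) r + (n / r) * deriv f r = M' / r ^ n := by
  have hf' : deriv f =ᶠ[𝓝 r] fun s => M s / s ^ n :=
    eventually_of_mem (Ioi_mem_nhds hr) fun s (hs : 0 < s) => by
      show deriv f s = M s / s ^ n
      rw [← hfM s hs]; field_simp
  have hquot := hM.fun_div (hasDerivAt_pow n r) (pow_ne_zero n hr.ne')
  rw [hf'.deriv_eq, hquot.deriv, hf'.eq_of_nhds]
  rcases n with _ | n
  · simp
  · rw [Nat.add_sub_cancel]
    field_simp
    ring

theorem poisson_of_mass_equation {Q N : ℝ → ℝ} {l ρ r : ℝ} (hr : 0 < r)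
    (hQ : DifferentiableAt ℝ Q r)
    (hmass : deriv (fun s => s * Q s) r + 2 * l * deriv (fun s => s * f0 s) r = 2 * r ^ 2 * ρ)
    (hN : ∀ s, 0 < s → 2 * s * deriv N s - 2 * l * f0 s - Q s = 0) :
    deriv (deriv N) r + (2 / r) * deriv N r = ρ := by
  have hf0 : DifferentiableAt ℝ f0 r := by
    unfold f0
    fun_prop (disch := positivity)
  have hM : HasDerivAt (fun s => s * Q s / 2 + l * (s * f0 s))
      (deriv (fun s => s * Q s) r / 2 + l * deriv (fun s => s * f0 s) r) r :=
    ((differentiableAt_id.mul hQ).hasDerivAt.div_const 2).add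
      ((differentiableAt_id.mul hf0).hasDerivAt.const_mul l)
  have h := deriv_deriv_add_div_mul_deriv_eq_of_pow_mul_deriv_eq 2 hr
    (fun s hs => by linear_combination (s / 2) * hN s hs) hM
  rw [Nat.cast_ofNat] at h
  rw [h]
  field_simp
  linear_combination hmass

theorem psi_eq_neg_mul_deriv_phi {Φ ψ : ℝ → ℝ} {hbar m s : ℝ} (hhbar : hbar ≠ 0) (hm : m ≠ 0)
    (h : (2 * m / hbar) * ψ s + deriv Φ s = 0) :
    ψ s = -(hbar / (2 * m)) * deriv Φ s := by
  field_simp at h ⊢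
  linear_combination h

theorem schrodinger_of_first_order_system {N Φ ψ : ℝ → ℝ} {hbar m η r : ℝ} (hhbar : hbar ≠ 0)
    (hm : m ≠ 0) (hr : 0 < r)
    (hψ : (η / hbar - m * N r / hbar) * Φ r - deriv ψ r - (2 / r) * ψ r = 0)
    (hΦ : ∀ s, 0 < s → (2 * m / hbar) * ψ s + deriv Φ s = 0) :
    η * Φ r = -(hbar ^ 2 / (2 * m)) * (deriv (deriv Φ) r + (2 / r) * deriv Φ r)
      + m * N r * Φ r := by
  have hψΦ : ψ =ᶠ[𝓝 r] fun s => -(hbar / (2 * m)) * deriv Φ s :=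
    eventually_of_mem (Ioi_mem_nhds hr) fun s hs => psi_eq_neg_mul_deriv_phi hhbar hm (hΦ s hs)
  rw [hψΦ.deriv_eq, deriv_const_mul_field', hψΦ.eq_of_nhds] at hψ
  field_simp at hψ ⊢
  linear_combination hψ

theorem limit_system_gives_newton_schrodinger_general (hbar m G η l : ℝ)
    (hhb : 0 < hbar) (hm : 0 < m)
    (Q N Φ₁ ψ₂ : ℝ → ℝ)
    (hQ : ContDiffOn ℝ 1 Q (Ioi 0))
    (h1 : ∀ r : ℝ, 0 < r →
      deriv (fun s => s * Q s) r + 2 * l * deriv (fun s => s * f0 s) r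
        - 16 * π * m * G * r ^ 2 * (Φ₁ r) ^ 2 = 0)
    (h2 : ∀ r : ℝ, 0 < r → 2 * r * deriv N r - 2 * l * f0 r - Q r = 0)
    (h3 : ∀ r : ℝ, 0 < r →
      (η / hbar - m * N r / hbar) * Φ₁ r - deriv ψ₂ r - (2 / r) * ψ₂ r = 0)
    (h4 : ∀ r : ℝ, 0 < r → (2 * m / hbar) * ψ₂ r + deriv Φ₁ r = 0) :
    ∀ r : ℝ, 0 < r →
      (-(deriv (deriv N) r + (2 / r) * deriv N r) = -(8 * π * m * G) * (Φ₁ r) ^ 2) ∧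
      (ψ₂ r = -(hbar / (2 * m)) * deriv Φ₁ r) ∧
      (η * Φ₁ r = -(hbar ^ 2 / (2 * m)) * (deriv (deriv Φ₁) r + (2 / r) * deriv Φ₁ r)
        + m * N r * Φ₁ r) := by
  intro r hr
  have hQr : DifferentiableAt ℝ Q r :=
    (hQ.differentiableOn one_ne_zero).differentiableAt (Ioi_mem_nhds hr)
  have hpoisson := poisson_of_mass_equation (ρ := 8 * π * m * G * Φ₁ r ^ 2) hr hQr
    (by linear_combination h1 r hr) h2
  refine ⟨by linear_combination -hpoisson, psi_eq_neg_mul_deriv_phi hhb.ne' hm.ne' (h4 r hr),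
    schrodinger_of_first_order_system hhb.ne' hm.ne' hr (h3 r hr) h4⟩

theorem limit_system_gives_newton_schrodinger (hbar m G η l : ℝ)
    (hhb : 0 < hbar) (hm : 0 < m) (hG : 0 < G)
    (Q N Φ₁ ψ₂ : ℝ → ℝ)
    (hQ : ContDiffOn ℝ 1 Q (Ioi 0)) (hN : ContDiffOn ℝ 1 N (Ioi 0))
    (hQ0 : ∃ C r₀ : ℝ, 0 < r₀ ∧ ∀ r ∈ Ioo (0:ℝ) r₀, |Q r| ≤ C)
    (hQinf : Q =O[atTop] fun r => 1 / r ^ 2)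
    (hNinf : Tendsto N atTop (𝓝 0))
    (hΦ : ContDiff ℝ 2 (radExt Φ₁))
    (hΦL2 : ∀ n : ℕ, n ≤ 2 →
      MemLp (fun x => ‖iteratedFDeriv ℝ n (radExt Φ₁) x‖) 2 (volume : Measure E3))
    (hψ : ContDiffOn ℝ 1 ψ₂ (Ici 0))
    (h1 : ∀ r : ℝ, 0 < r →
      deriv (fun s => s * Q s) r + 2 * l * deriv (fun s => s * f0 s) r
        - 16 * π * m * G * r ^ 2 * (Φ₁ r) ^ 2 = 0)
    (h2 : ∀ r : ℝ, 0 < r → 2 * r * deriv N r - 2 * l * f0 r - Q r = 0)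
    (h3 : ∀ r : ℝ, 0 < r →
      (η / hbar - m * N r / hbar) * Φ₁ r - deriv ψ₂ r - (2 / r) * ψ₂ r = 0)
    (h4 : ∀ r : ℝ, 0 < r → (2 * m / hbar) * ψ₂ r + deriv Φ₁ r = 0) :
    ∀ r : ℝ, 0 < r →
      (-(deriv (deriv N) r + (2 / r) * deriv N r) = -(8 * π * m * G) * (Φ₁ r) ^ 2) ∧
      (ψ₂ r = -(hbar / (2 * m)) * deriv Φ₁ r) ∧
      (η * Φ₁ r = -(hbar ^ 2 / (2 * m)) * (deriv (deriv Φ₁) r + (2 / r) * deriv Φ₁ r)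
        + m * N r * Φ₁ r) :=
  limit_system_gives_newton_schrodinger_general hbar m G η l hhb hm Q N Φ₁ ψ₂ hQ h1 h2 h3 h4
end
end

section
/- Let f₀(r) = r²/(1+r)³, let l ∈ ℝ, let g : [0,∞) → ℝ be integrable (∫_0^∞ |g| dr < ∞), and let Q ∈ C¹((0,∞)) be bounded on a neighbourhood of 0 and satisfy sup_{r≥1} r²|Q(r)| < ∞. If (rQ)′ + 2l(rf₀)′ = g on (0,∞), then 2l = ∫_0^∞ g(r) dr, and consequently Q(r) = (1/r)∫_0^r [−2l(sf₀(s))′ + g(s)] ds = −(1/r)∫_r^∞ [−2l(sf₀(s))′ + g(s)] ds for all r > 0. -/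
/-!
Put `H(r) = r Q(r)`. Boundedness of `Q` near `0` and `r² Q(r) = O(1)` at infinity make `H`
vanish at both ends of `(0, ∞)`, while `r f₀(r) = r³/(1+r)³` rises from `0` to `1`. Integrating
`H' = g - 2l (r f₀)'` over `(0, ∞)` therefore gives `0 = ∫ g - 2l`, and integrating it over
`(0, r]` and over `(r, ∞)` gives the two formulas for `H(r)`.
-/

noncomputable section

open MeasureTheory Real Set

open Filter Topology

lemma hasDerivAt_mul_f0 {t : ℝ} (ht : 1 + t ≠ 0) :
    HasDerivAt (fun s => s * f0 s) (3 * t ^ 2 / (1 + t) ^ 4) t := by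
  have hcube : (fun s : ℝ => s * f0 s) = fun s => s ^ 3 / (1 + s) ^ 3 := by
    funext s; rw [f0, ← mul_div_assoc, ← pow_succ']
  rw [hcube]
  have hden : HasDerivAt (fun s : ℝ => (1 + s) ^ 3) (3 * (1 + t) ^ 2) t := by
    simpa using ((hasDerivAt_id t).const_add 1).fun_pow 3
  refine ((hasDerivAt_pow 3 t).div hden (pow_ne_zero 3 ht)).congr_deriv ?_
  field_simp
  ring

lemma tendsto_mul_f0_atTop : Tendsto (fun t => t * f0 t) atTop (𝓝 1) := by
  have hlim : Tendsto (fun t : ℝ => ((t⁻¹ + 1)⁻¹) ^ 3) atTop (𝓝 1) := by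
    simpa using
      (((tendsto_inv_atTop_zero (𝕜 := ℝ)).add_const 1).inv₀ (by norm_num)).pow 3
  refine hlim.congr' ?_
  filter_upwards [eventually_gt_atTop 0] with t ht
  rw [f0]
  field_simp

lemma hasDerivAt_deriv_mul_f0 {t : ℝ} (ht : 0 ≤ t) :
    HasDerivAt (fun s => s * f0 s) (deriv (fun s => s * f0 s) t) t :=
  (hasDerivAt_mul_f0 (by positivity)).differentiableAt.hasDerivAt

lemma integrableOn_deriv_mul_f0 : IntegrableOn (deriv fun t => t * f0 t) (Ioi 0) := by
  refine integrableOn_Ioi_deriv_of_nonneg' (fun t ht => hasDerivAt_deriv_mul_f0 ht)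
    (fun t ht => ?_) tendsto_mul_f0_atTop
  have : (0 : ℝ) < t := ht
  rw [(hasDerivAt_mul_f0 (by positivity)).deriv]
  positivity

lemma integral_deriv_mul_f0 : ∫ t in Ioi 0, deriv (fun t => t * f0 t) t = 1 := by
  rw [integral_Ioi_of_hasDerivAt_of_tendsto' (fun t ht => hasDerivAt_deriv_mul_f0 ht)
    integrableOn_deriv_mul_f0 tendsto_mul_f0_atTop]
  simp [f0]

lemma tendsto_mul_nhdsGT_zero_of_abs_le {Q : ℝ → ℝ} {C r₀ : ℝ} (hr₀ : 0 < r₀)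
    (hC : ∀ r ∈ Ioo 0 r₀, |Q r| ≤ C) : Tendsto (fun r => r * Q r) (𝓝[>] 0) (𝓝 0) := by
  refine tendsto_nhdsWithin_of_tendsto_nhds tendsto_id |>.zero_mul_isBoundedUnder_le ?_
  refine isBoundedUnder_of_eventually_le (a := C) ?_
  filter_upwards [Ioo_mem_nhdsGT hr₀] with r hr using hC r hr

lemma tendsto_mul_atTop_zero_of_sq_mul_abs_le {Q : ℝ → ℝ} {C : ℝ}
    (hC : ∀ r, 1 ≤ r → r ^ 2 * |Q r| ≤ C) : Tendsto (fun r => r * Q r) atTop (𝓝 0) := by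
  have hbdd : IsBoundedUnder (· ≤ ·) atTop (fun r => ‖r ^ 2 * Q r‖) := by
    refine isBoundedUnder_of_eventually_le (a := C) ?_
    filter_upwards [eventually_ge_atTop 1] with r hr
    simpa [abs_mul] using hC r hr
  refine (tendsto_inv_atTop_zero.zero_mul_isBoundedUnder_le hbdd).congr' ?_
  filter_upwards [eventually_gt_atTop 0] with r hr
  field_simp

lemma integral_Ioc_of_hasDerivAt_of_continuousWithinAt {f f' : ℝ → ℝ} {a b : ℝ}
    (hab : a ≤ b) (hcont : ContinuousWithinAt f (Ici a) a)
    (hderiv : ∀ x ∈ Ioi a, HasDerivAt f (f' x) x) (hint : IntegrableOn f' (Ioc a b)) :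
    ∫ x in Ioc a b, f' x = f b - f a := by
  rw [← intervalIntegral.integral_of_le hab]
  refine intervalIntegral.integral_eq_sub_of_hasDerivAt_of_le hab (fun x hx => ?_)
    (fun x hx => hderiv x hx.1) ((intervalIntegrable_iff_integrableOn_Ioc_of_le hab).2 hint)
  rcases hx.1.eq_or_lt with rfl | hax
  · exact hcont.mono Icc_subset_Ici_self
  · exact (hderiv x hax).continuousAt.continuousWithinAt

theorem adm_mass_determined (l : ℝ) (g Q : ℝ → ℝ)
    (hg : IntegrableOn g (Ioi 0))
    (hQ : ContDiffOn ℝ 1 Q (Ioi 0))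
    (hQ0 : ∃ C r₀ : ℝ, 0 < r₀ ∧ ∀ r ∈ Ioo (0:ℝ) r₀, |Q r| ≤ C)
    (hQinf : ∃ C : ℝ, ∀ r : ℝ, 1 ≤ r → r ^ 2 * |Q r| ≤ C)
    (heq : ∀ r : ℝ, 0 < r →
      deriv (fun s => s * Q s) r + 2 * l * deriv (fun s => s * f0 s) r = g r) :
    2 * l = (∫ r in Ioi (0:ℝ), g r) ∧
    (∀ r : ℝ, 0 < r →
      Q r = (1 / r) * ∫ s in Ioc (0:ℝ) r,
        (-(2 * l) * deriv (fun t => t * f0 t) s + g s)) ∧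
    (∀ r : ℝ, 0 < r →
      Q r = -(1 / r) * ∫ s in Ioi r,
        (-(2 * l) * deriv (fun t => t * f0 t) s + g s)) := by
  set H : ℝ → ℝ := fun s => s * Q s
  obtain ⟨C₀, r₀, hr₀, hC₀⟩ := hQ0
  obtain ⟨C, hC⟩ := hQinf
  have hHderiv : ∀ s ∈ Ioi (0:ℝ), HasDerivAt H (deriv H s) s := fun s hs =>
    (differentiableAt_id.mul ((hQ.differentiableOn one_ne_zero).differentiableAt
      (isOpen_Ioi.mem_nhds hs))).hasDerivAt
  have hH0 : ContinuousWithinAt H (Ici 0) 0 := by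
    rw [← continuousWithinAt_Ioi_iff_Ici]
    simpa [ContinuousWithinAt, H] using tendsto_mul_nhdsGT_zero_of_abs_le hr₀ hC₀
  have hHtop : Tendsto H atTop (𝓝 0) := tendsto_mul_atTop_zero_of_sq_mul_abs_le hC
  have hintegrand : EqOn (fun s => -(2 * l) * deriv (fun t => t * f0 t) s + g s) (deriv H)
      (Ioi 0) := fun s hs => by linarith [heq s hs]
  have hHint : IntegrableOn (deriv H) (Ioi 0) :=
    IntegrableOn.congr_fun ((integrableOn_deriv_mul_f0.const_mul _).add hg) hintegrand
      measurableSet_Ioi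
  refine ⟨?_, fun r hr => ?_, fun r hr => ?_⟩
  · have hg_eq : EqOn g (fun s => deriv H s + 2 * l * deriv (fun t => t * f0 t) s) (Ioi 0) :=
      fun s hs => (heq s hs).symm
    rw [setIntegral_congr_fun measurableSet_Ioi hg_eq,
      integral_add hHint (integrableOn_deriv_mul_f0.const_mul _), integral_const_mul,
      integral_deriv_mul_f0, integral_Ioi_of_hasDerivAt_of_tendsto hH0 hHderiv hHint hHtop]
    simp [H]
  · rw [setIntegral_congr_fun measurableSet_Ioc (hintegrand.mono Ioc_subset_Ioi_self),
      integral_Ioc_of_hasDerivAt_of_continuousWithinAt hr.le hH0 hHderiv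
        (hHint.mono_set Ioc_subset_Ioi_self)]
    simp only [H, zero_mul, sub_zero]
    field_simp
  · rw [setIntegral_congr_fun measurableSet_Ioi (hintegrand.mono (Ioi_subset_Ioi hr.le)),
      integral_Ioi_of_hasDerivAt_of_tendsto (hHderiv r hr).continuousAt.continuousWithinAt
        (fun s hs => hHderiv s (hr.trans hs)) (hHint.mono_set (Ioi_subset_Ioi hr.le)) hHtop]
    simp only [H, zero_sub]
    field_simp
end
end
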